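/- arXiv:1606.07236 — 3 statements merged into one kernel-verified Lean document; each statement's English description precedes it below -/
import Mathlib

section
/- For every bipartite connected graph G, the vertex-PI index satisfies PI_v(G) = |V(G)| · |E(G)|. -/
/-! For an edge `uv` of a connected bipartite graph, a shortest walk from `x` to `u`, the edge,
and a shortest walk back from `v` to `x` form a closed walk, which has even length; hence
`d(x,u)` and `d(x,v)` have different parities and in particular differ. So every vertex lies
in exactly one of `N_1(uv)` and `N_2(uv)`, and each edge contributes `|V|` to `PI_v`. -/

open Finset SimpleGraph
open scoped Classical

noncomputable def eDist {V : Type*} (G : SimpleGraph V) (x : V) (f : Sym2 V) : ℕ :=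
  Sym2.lift ⟨fun a b => min (G.dist x a) (G.dist x b), fun _ _ => min_comm _ _⟩ f

noncomputable def nSet {V : Type*} [Fintype V] (G : SimpleGraph V) (u v : V) : Finset V :=
  Finset.univ.filter (fun x => G.dist x u < G.dist x v)

noncomputable def mSet {V : Type*} [Fintype V] (G : SimpleGraph V) (u v : V) : Finset (Sym2 V) :=
  G.edgeFinset.filter (fun f => eDist G u f < eDist G v f)

theorem SimpleGraph.Connected.dist_ne_dist_of_adj {V : Type*} {G : SimpleGraph V}
    (hconn : G.Connected) (hbip : G.Colorable 2) {u v : V} (huv : G.Adj u v) (x : V) : G.dist x u ≠ G.dist x v := by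
  obtain ⟨p, hp⟩ := hconn.exists_walk_length_eq_dist x u
  obtain ⟨q, hq⟩ := hconn.exists_walk_length_eq_dist x v
  have heven : Even ((p.concat huv).append q.reverse).length :=
    two_colorable_iff_forall_loop_even.mp hbip x _
  rw [Walk.length_append, Walk.length_concat, Walk.length_reverse, hp, hq] at heven
  intro heq
  rw [heq, add_right_comm, ← two_mul] at heven
  exact Nat.not_even_two_mul_add_one _ heven

theorem card_nSet_add_card_nSet {V : Type*} [Fintype V] {G : SimpleGraph V} {u v : V}
    (hne : ∀ x, G.dist x u ≠ G.dist x v) :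
    (nSet G u v).card + (nSet G v u).card = Fintype.card V := by
  have hcompl : nSet G v u = univ.filter (fun x => ¬ G.dist x u < G.dist x v) :=
    filter_congr fun x _ => by have := hne x; omega
  rw [hcompl, nSet, card_filter_add_card_filter_not, card_univ]

/-- For every bipartite connected graph G, PI_v(G) = |V(G)| · |E(G)|. -/
theorem stmt0 {V : Type*} [Fintype V] (G : SimpleGraph V)
    (hconn : G.Connected) (hbip : G.Colorable 2) :
    ∑ e ∈ G.edgeFinset,
      Sym2.lift ⟨fun u v => (nSet G u v).card + (nSet G v u).card,
        fun _ _ => add_comm _ _⟩ e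
      = Fintype.card V * G.edgeFinset.card := by
  have hedge : ∀ e ∈ G.edgeFinset,
      Sym2.lift ⟨fun u v => (nSet G u v).card + (nSet G v u).card,
        fun _ _ => add_comm _ _⟩ e = Fintype.card V := by
    intro e he
    induction e using Sym2.ind with
    | _ u v =>
      rw [mem_edgeFinset, mem_edgeSet] at he
      exact card_nSet_add_card_nSet (hconn.dist_ne_dist_of_adj hbip he)
  rw [sum_congr rfl hedge, sum_const, smul_eq_mul, mul_comm]
end

section
/- For a weighted bipartite connected graph (G, w, w'), the weighted vertex-PI index satisfies PI_v(G, w, w') = n(G) · m(G), where n(G) is the total vertex weight and m(G) is the total edge weight. -/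
open Finset SimpleGraph
open scoped Classical

/-! If `x` were equidistant from the ends of an edge `uv`, a shortest path to `u`, the edge, and
a shortest path back from `v` would form a closed walk of odd length `2 d(x,u) + 1`, which a
bipartite graph does not have. Hence every vertex lies strictly closer to one end of each edge,
so `n₁(e) + n₂(e) = n(G)` for every edge `e` and the sum collapses to `n(G) · m(G)`. -/

namespace SimpleGraph

variable {V : Type*} {G : SimpleGraph V}

theorem dist_ne_dist_of_adj (hbip : G.Colorable 2) {x u v : V} (hxu : G.Reachable x u)
    (huv : G.Adj u v) : G.dist x u ≠ G.dist x v := by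
  intro h
  obtain ⟨p, hp⟩ := hxu.exists_walk_length_eq_dist
  obtain ⟨q, hq⟩ := (hxu.trans huv.reachable).exists_walk_length_eq_dist
  have heven := two_colorable_iff_forall_loop_even.mp hbip x ((p.concat huv).append q.reverse)
  rw [Walk.length_append, Walk.length_concat, Walk.length_reverse, hp, hq, h] at heven
  exact Nat.not_even_iff_odd.mpr ⟨G.dist x v, by ring⟩ heven

theorem sum_nSet_add_sum_nSet_of_adj [Fintype V] {M : Type*} [AddCommMonoid M]
    (hconn : G.Connected) (hbip : G.Colorable 2) {u v : V} (huv : G.Adj u v) (f : V → M) :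
    ∑ x ∈ nSet G u v, f x + ∑ x ∈ nSet G v u, f x = ∑ x, f x := by
  have hcompl : nSet G v u = univ.filter (fun x => ¬ G.dist x u < G.dist x v) :=
    filter_congr fun x _ => by
      have := dist_ne_dist_of_adj hbip (hconn x u) huv
      omega
  rw [nSet, hcompl, sum_filter_add_sum_filter_not]

end SimpleGraph

theorem stmt2_general {V : Type*} [Fintype V] (G : SimpleGraph V)
    (hconn : G.Connected) (hbip : G.Colorable 2)
    (w : V → ℝ) (w' : Sym2 V → ℝ) :
    ∑ e ∈ G.edgeFinset, w' e *
        Sym2.lift ⟨fun u v => (∑ x ∈ nSet G u v, w x) + ∑ x ∈ nSet G v u, w x,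
          fun _ _ => add_comm _ _⟩ e
      = (∑ x : V, w x) * ∑ e ∈ G.edgeFinset, w' e := by
  rw [mul_sum]
  refine sum_congr rfl fun e he => ?_
  induction e using Sym2.ind with
  | _ u v =>
    rw [Sym2.lift_mk]
    dsimp only
    rw [sum_nSet_add_sum_nSet_of_adj hconn hbip (mem_edgeFinset.mp he) w, mul_comm]

/-- For a weighted bipartite connected graph, PI_v(G,w,w') = n(G)·m(G). -/
theorem stmt2 {V : Type*} [Fintype V] (G : SimpleGraph V)
    (hconn : G.Connected) (hbip : G.Colorable 2)
    (w : V → ℝ) (w' : Sym2 V → ℝ)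
    (hw : ∀ x : V, 0 < w x) (hw' : ∀ f ∈ G.edgeFinset, 0 < w' f) :
    ∑ e ∈ G.edgeFinset, w' e *
        Sym2.lift ⟨fun u v => (∑ x ∈ nSet G u v, w x) + ∑ x ∈ nSet G v u, w x,
          fun _ _ => add_comm _ _⟩ e
      = (∑ x : V, w x) * ∑ e ∈ G.edgeFinset, w' e :=
  stmt2_general G hconn hbip w w'
end

section
/- For an edge-weighted bipartite connected graph (G, w'), the weighted PI index satisfies PI_e(G, w') ≤ m(G)² − Σ_{e ∈ E(G)} w'(e)², with equality if and only if for every edge e = uv, every edge f ≠ e of G satisfies d(f,u) ≠ d(f,v). -/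
open Finset SimpleGraph
open scoped Classical

/-!
The edges counted for `e = uv` are those `f` with `d(f,u) ≠ d(f,v)`; since `e` itself is at
distance `0` from both ends, they form a subset of `E(G) \ {e}`. Hence the contribution of `e` to
`PI_e` is at most `w'(e) (m(G) - w'(e))`, with equality exactly when no edge other than `e` is
equidistant from `u` and `v` (the weights being positive), and summing over `e` gives
`m(G)² - Σ w'(e)²`.
-/

theorem Finset.sum_mul_sum_erase {α R : Type*} [DecidableEq α] [CommRing R]
    (s : Finset α) (f : α → R) :
    ∑ a ∈ s, f a * ∑ b ∈ s.erase a, f b = (∑ a ∈ s, f a) ^ 2 - ∑ a ∈ s, f a ^ 2 := by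
  have h : ∀ a ∈ s, f a * ∑ b ∈ s.erase a, f b = f a * ∑ b ∈ s, f b - f a ^ 2 := by
    intro a ha
    rw [sum_erase_eq_sub ha]
    ring
  rw [sum_congr rfl h, sum_sub_distrib, ← sum_mul, sq]

theorem Finset.sum_eq_sum_iff_of_subset_of_pos {α R : Type*}
    [AddCommMonoid R] [PartialOrder R] [IsOrderedCancelAddMonoid R]
    {s t : Finset α} {f : α → R} (hst : s ⊆ t) (hf : ∀ a ∈ t, 0 < f a) :
    ∑ a ∈ s, f a = ∑ a ∈ t, f a ↔ t ⊆ s := by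
  refine ⟨fun heq a hat => ?_, fun hts => by rw [Subset.antisymm hst hts]⟩
  by_contra has
  exact (sum_lt_sum_of_subset hst hat has (hf a hat) fun b hbt _ => (hf b hbt).le).ne heq

section

variable {V : Type*} (G : SimpleGraph V)

theorem eDist_mk_left (u v : V) : eDist G u s(u, v) = 0 := by
  simp [eDist]

theorem eDist_mk_right (u v : V) : eDist G v s(u, v) = 0 := by
  simp [eDist]

variable [Fintype V]

theorem disjoint_mSet_swap (u v : V) : Disjoint (mSet G u v) (mSet G v u) := by
  simp only [Finset.disjoint_left, mSet, mem_filter]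
  exact fun _ h₁ h₂ => h₂.2.not_gt h₁.2

theorem mem_mSet_union_mSet_swap {u v : V} {f : Sym2 V} :
    f ∈ mSet G u v ∪ mSet G v u ↔ f ∈ G.edgeFinset ∧ eDist G u f ≠ eDist G v f := by
  simp only [mSet, mem_union, mem_filter, ne_iff_lt_or_gt]
  tauto

theorem mSet_union_mSet_swap_subset_erase (u v : V) :
    mSet G u v ∪ mSet G v u ⊆ G.edgeFinset.erase s(u, v) := by
  intro f hf
  rw [mem_mSet_union_mSet_swap] at hf
  refine mem_erase.2 ⟨?_, hf.1⟩
  rintro rfl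
  exact hf.2 (by rw [eDist_mk_left, eDist_mk_right])

theorem erase_subset_mSet_union_mSet_swap_iff (u v : V) :
    G.edgeFinset.erase s(u, v) ⊆ mSet G u v ∪ mSet G v u ↔
      ∀ f ∈ G.edgeFinset, f ≠ s(u, v) → eDist G u f ≠ eDist G v f := by
  simp only [subset_iff, mem_erase, mem_mSet_union_mSet_swap]
  exact ⟨fun h f hf hne => (h ⟨hne, hf⟩).2, fun h f hf => ⟨hf.2, h f hf.2 hf.1⟩⟩

variable {G} {w : Sym2 V → ℝ}

theorem sum_mSet_add_sum_mSet_swap_le (hw : ∀ f ∈ G.edgeFinset, 0 ≤ w f) (u v : V) :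
    ∑ f ∈ mSet G u v, w f + ∑ f ∈ mSet G v u, w f ≤ ∑ f ∈ G.edgeFinset.erase s(u, v), w f := by
  rw [← sum_union (disjoint_mSet_swap G u v)]
  exact sum_le_sum_of_subset_of_nonneg (mSet_union_mSet_swap_subset_erase G u v)
    fun f hf _ => hw f (mem_of_mem_erase hf)

theorem sum_mSet_add_sum_mSet_swap_eq_iff (hw : ∀ f ∈ G.edgeFinset, 0 < w f) (u v : V) :
    ∑ f ∈ mSet G u v, w f + ∑ f ∈ mSet G v u, w f = ∑ f ∈ G.edgeFinset.erase s(u, v), w f ↔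
      ∀ f ∈ G.edgeFinset, f ≠ s(u, v) → eDist G u f ≠ eDist G v f := by
  rw [← sum_union (disjoint_mSet_swap G u v),
    sum_eq_sum_iff_of_subset_of_pos (mSet_union_mSet_swap_subset_erase G u v)
      fun f hf => hw f (mem_of_mem_erase hf),
    erase_subset_mSet_union_mSet_swap_iff]

end

theorem stmt11_general {V : Type*} [Fintype V] (G : SimpleGraph V)
    (w' : Sym2 V → ℝ) (hw' : ∀ f ∈ G.edgeFinset, 0 < w' f) :
    (∑ e ∈ G.edgeFinset, w' e *
        Sym2.lift ⟨fun a b => (∑ f ∈ mSet G a b, w' f) + ∑ f ∈ mSet G b a, w' f,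
          fun _ _ => add_comm _ _⟩ e)
      ≤ (∑ e ∈ G.edgeFinset, w' e) ^ 2 - ∑ e ∈ G.edgeFinset, (w' e) ^ 2 ∧
    ((∑ e ∈ G.edgeFinset, w' e *
        Sym2.lift ⟨fun a b => (∑ f ∈ mSet G a b, w' f) + ∑ f ∈ mSet G b a, w' f,
          fun _ _ => add_comm _ _⟩ e)
      = (∑ e ∈ G.edgeFinset, w' e) ^ 2 - ∑ e ∈ G.edgeFinset, (w' e) ^ 2
      ↔ ∀ u v : V, G.Adj u v → ∀ f ∈ G.edgeFinset, f ≠ s(u,v) →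
          eDist G u f ≠ eDist G v f) := by
  set m : Sym2 V → ℝ := Sym2.lift ⟨fun a b => (∑ f ∈ mSet G a b, w' f) + ∑ f ∈ mSet G b a, w' f,
    fun _ _ => add_comm _ _⟩
  have hle : ∀ e ∈ G.edgeFinset, w' e * m e ≤ w' e * ∑ f ∈ G.edgeFinset.erase e, w' f := by
    refine fun e he => mul_le_mul_of_nonneg_left ?_ (hw' e he).le
    induction e using Sym2.ind with
    | _ u v => exact sum_mSet_add_sum_mSet_swap_le (fun f hf => (hw' f hf).le) u v
  rw [← sum_mul_sum_erase, sum_eq_sum_iff_of_le hle]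
  refine ⟨sum_le_sum hle, ?_⟩
  have hcancel : ∀ e ∈ G.edgeFinset,
      w' e * m e = w' e * ∑ f ∈ G.edgeFinset.erase e, w' f ↔
        m e = ∑ f ∈ G.edgeFinset.erase e, w' f := fun e he =>
    mul_right_inj' (hw' e he).ne'
  simp only [forall₂_congr hcancel, ← sum_mSet_add_sum_mSet_swap_eq_iff hw']
  constructor
  · exact fun h u v huv => h s(u, v) (G.mem_edgeFinset.2 huv)
  · intro h e he
    induction e using Sym2.ind with
    | _ u v => exact h u v (G.mem_edgeFinset.1 he)

/-- For an edge-weighted bipartite connected graph, PI_e(G,w') ≤ m(G)² − Σ_e w'(e)²,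
with equality iff for every edge e = uv every edge f ≠ e satisfies d(f,u) ≠ d(f,v). -/
theorem stmt11 {V : Type*} [Fintype V] (G : SimpleGraph V)
    (hconn : G.Connected) (hbip : G.Colorable 2)
    (w' : Sym2 V → ℝ) (hw' : ∀ f ∈ G.edgeFinset, 0 < w' f) :
    (∑ e ∈ G.edgeFinset, w' e *
        Sym2.lift ⟨fun a b => (∑ f ∈ mSet G a b, w' f) + ∑ f ∈ mSet G b a, w' f,
          fun _ _ => add_comm _ _⟩ e)
      ≤ (∑ e ∈ G.edgeFinset, w' e) ^ 2 - ∑ e ∈ G.edgeFinset, (w' e) ^ 2 ∧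
    ((∑ e ∈ G.edgeFinset, w' e *
        Sym2.lift ⟨fun a b => (∑ f ∈ mSet G a b, w' f) + ∑ f ∈ mSet G b a, w' f,
          fun _ _ => add_comm _ _⟩ e)
      = (∑ e ∈ G.edgeFinset, w' e) ^ 2 - ∑ e ∈ G.edgeFinset, (w' e) ^ 2
      ↔ ∀ u v : V, G.Adj u v → ∀ f ∈ G.edgeFinset, f ≠ s(u,v) →
          eDist G u f ≠ eDist G v f) :=
  stmt11_general G w' hw'
end
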